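/- Let R be a ring, S a left Ore multiplicative subset, and M₁ ⊂ M₂ R-modules on which every element of S acts injectively, such that M₂/M₁ is simple. Then every element of S acts injectively on M₂/M₁ if and only if S⁻¹M₁ ≠ S⁻¹M₂ (as submodules of S⁻¹M₂). -/

import Mathlib

/-!
`S⁻¹N = S⁻¹M₂` holds exactly when `M₂/N` is `S`-torsion. By the Ore condition, a single
nonzero `S`-torsion element of a simple module generates it and forces the whole module to be
`S`-torsion; so `M₂/N` is either `S`-torsion or `S`-torsion-free, i.e. every `s ∈ S` acts
injectively on it.
-/

open OreLocalization

/-- The canonical map `M → S⁻¹M`, `m ↦ m /ₒ 1`, as an `R`-linear map. -/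
noncomputable def oreLocMap (R : Type*) [Ring R] (S : Submonoid R) [OreLocalization.OreSet S]
    (M : Type*) [AddCommGroup M] [Module R M] : M →ₗ[R] M[S⁻¹] where
  toFun m := m /ₒ (1 : S)
  map_add' m m' := add_oreDiv.symm
  map_smul' r m := by
    rw [RingHom.id_apply, ← smul_one_oreDiv_one_smul,
      oreDiv_smul_char (r • (1 : R)) m 1 1 r 1 (by simp)]
    simp

/-- The localization `S⁻¹N` of a submodule `N ⊆ M`, as the `R`-submodule of `S⁻¹M`
generated by the fractions `n /ₒ s` with `n ∈ N`, `s ∈ S`. -/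
noncomputable def oreLocSub {R : Type*} [Ring R] {S : Submonoid R} [OreLocalization.OreSet S]
    {M : Type*} [AddCommGroup M] [Module R M] (N : Submodule R M) : Submodule R M[S⁻¹] :=
  Submodule.span R {x : M[S⁻¹] | ∃ n ∈ N, ∃ s : S, x = n /ₒ s}

section OreLocSub

variable {R : Type*} [Ring R] {S : Submonoid R} [OreLocalization.OreSet S]
  {M : Type*} [AddCommGroup M] [Module R M]

theorem mem_oreLocSub_iff {N : Submodule R M} {x : M[S⁻¹]} :
    x ∈ oreLocSub (S := S) N ↔ ∃ n ∈ N, ∃ s : S, x = n /ₒ s := by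
  refine ⟨fun hx => ?_, fun hx => Submodule.subset_span hx⟩
  refine Submodule.span_induction (fun x hx => hx) ⟨0, N.zero_mem, 1, (zero_oreDiv 1).symm⟩
    ?_ ?_ hx
  · rintro x y - - ⟨n, hn, s, rfl⟩ ⟨n', hn', s', rfl⟩
    obtain ⟨r'', s'', -, hsum⟩ := oreDivAddChar' n n' s s'
    exact ⟨s'' • n + r'' • n', N.add_mem (N.smul_of_tower_mem s'' hn) (N.smul_mem r'' hn'),
      s'' * s, hsum⟩
  · rintro r x - ⟨n, hn, s, rfl⟩
    rw [smul_oreDiv]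
    exact ⟨_, N.smul_mem _ hn, _, rfl⟩

theorem oreLocSub_eq_oreLocSub_top_iff {N : Submodule R M} :
    oreLocSub (S := S) N = oreLocSub ⊤ ↔ ∀ m : M, ∃ s : S, (s : R) • m ∈ N := by
  constructor
  · intro h m
    have hm : m /ₒ (1 : S) ∈ oreLocSub (S := S) N := h ▸ Submodule.subset_span ⟨m, trivial, 1, rfl⟩
    obtain ⟨n, hn, s, hms⟩ := mem_oreLocSub_iff.mp hm
    obtain ⟨u, v, hnm, hsv⟩ := oreDiv_eq_iff.mp hms
    rw [Submonoid.coe_one, mul_one] at hsv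
    refine ⟨⟨v, hsv ▸ (u * s).2⟩, ?_⟩
    rw [← hnm, Submonoid.smul_def]
    exact N.smul_mem _ hn
  · intro h
    refine le_antisymm (Submodule.span_mono fun x ⟨n, _, s, hx⟩ => ⟨n, trivial, s, hx⟩) ?_
    refine Submodule.span_le.mpr ?_
    rintro x ⟨m, -, t, rfl⟩
    obtain ⟨v, hv⟩ := h m
    rw [OreLocalization.expand' m t v]
    exact Submodule.subset_span ⟨v • m, by rwa [Submonoid.smul_def], v * t, rfl⟩

end OreLocSub

section SimpleModule

variable {R : Type*} [Ring R] {S : Submonoid R} [OreLocalization.OreSet S]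
  {Q : Type*} [AddCommGroup Q] [Module R Q] [IsSimpleModule R Q]

/-- Writing `y = r • x`, the Ore condition `s' * r = r' * s` gives `s' • y = r' • s • x = 0`. -/
theorem IsSimpleModule.exists_smul_eq_zero_of_smul_eq_zero {x : Q} (hx : x ≠ 0) {s : S}
    (hsx : (s : R) • x = 0) (y : Q) : ∃ s' : S, (s' : R) • y = 0 := by
  obtain ⟨r, rfl⟩ := Submodule.mem_span_singleton.mp
    ((IsSimpleModule.span_singleton_eq_top R hx).symm ▸ Submodule.mem_top : y ∈ _)
  obtain ⟨r', s', hore⟩ := oreCondition r s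
  exact ⟨s', by rw [smul_smul, hore, mul_smul, hsx, smul_zero]⟩

theorem IsSimpleModule.forall_isSMulRegular_iff :
    (∀ s : S, IsSMulRegular Q (s : R)) ↔ ¬ ∀ y : Q, ∃ s : S, (s : R) • y = 0 := by
  constructor
  · intro hreg htors
    have := IsSimpleModule.nontrivial R Q
    obtain ⟨y, hy⟩ := exists_ne (0 : Q)
    obtain ⟨s, hsy⟩ := htors y
    exact hy ((hreg s).right_eq_zero_of_smul hsy)
  · intro hntors s
    refine isSMulRegular_iff_right_eq_zero_of_smul.mpr fun x hsx => ?_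
    by_contra hx
    exact hntors (exists_smul_eq_zero_of_smul_eq_zero hx hsx)

end SimpleModule

theorem stmt4_general {R : Type*} [Ring R] {S : Submonoid R} [OreLocalization.OreSet S]
    {M₂ : Type*} [AddCommGroup M₂] [Module R M₂]
    (N : Submodule R M₂) (hsimple : IsSimpleModule R (M₂ ⧸ N)) :
    (∀ s : S, Function.Injective fun x : M₂ ⧸ N => (s : R) • x) ↔
      oreLocSub (S := S) N ≠ oreLocSub (S := S) (⊤ : Submodule R M₂) := by
  have htors : (∀ y : M₂ ⧸ N, ∃ s : S, (s : R) • y = 0) ↔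
      ∀ m : M₂, ∃ s : S, (s : R) • m ∈ N := by
    simp only [(Submodule.mkQ_surjective N).forall, Submodule.mkQ_apply,
      ← Submodule.Quotient.mk_smul, Submodule.Quotient.mk_eq_zero]
  exact IsSimpleModule.forall_isSMulRegular_iff.trans
    (htors.trans oreLocSub_eq_oreLocSub_top_iff.symm).not

/-- for submodules `M₁ ⊂ M₂` with simple quotient, on which every element of `S`
acts injectively, every element of `S` acts injectively on `M₂/M₁` if and only if
`S⁻¹M₁ ≠ S⁻¹M₂` as submodules of `S⁻¹M₂`. -/
theorem stmt4 {R : Type*} [Ring R] {S : Submonoid R} [OreLocalization.OreSet S]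
    {M₂ : Type*} [AddCommGroup M₂] [Module R M₂]
    (hinj : ∀ s : S, Function.Injective fun m : M₂ => (s : R) • m)
    (N : Submodule R M₂) (hN : N < ⊤) (hsimple : IsSimpleModule R (M₂ ⧸ N)) :
    (∀ s : S, Function.Injective fun x : M₂ ⧸ N => (s : R) • x) ↔
      oreLocSub (S := S) N ≠ oreLocSub (S := S) (⊤ : Submodule R M₂) :=
  stmt4_general N hsimple
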